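/- arXiv:2012.09436 — 2 statements merged into one kernel-verified Lean document; each statement's English description precedes it below -/
import Mathlib

section
/- Let η_Δ = Σ_{v=0}^{Δ} v·2^{−v}/(2 − 2^{−Δ}) and κ_Δ = Σ_{v=0}^{Δ} (v − η_Δ)²·2^{−v}/(2 − 2^{−Δ}). Then for every fixed integer u ≥ 0, (1/κ_Δ) Σ_{i=0}^{Δ−u} (2^{−i}/(2 − 2^{−Δ})) (i − η_Δ)(i + u − η_Δ) converges to 1 as Δ → ∞ (Δ ranging over integers ≥ u). -/
/-!
The truncated moments `M_k(n) = Σ_{i ≤ n} i^k 2^{-i}` have closed forms and converge to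
`2, 2, 6` for `k = 0, 1, 2`, so `η_Δ → 1`. Expanding, the unnormalised lag-`b` sum
`Σ_{i ≤ n} 2^{-i} (i - a)(i + b - a)` is `M₂ + (b - 2a) M₁ + (a² - ab) M₀`, whose limit as
`n → ∞`, `a → 1` is `6 + 2(b - 2) + 2(1 - b) = 4` whatever the lag `b`. Both `κ_Δ` (lag `0`) and
the lag-`u` sum are such sums over the same normaliser `2 - 2^{-Δ}`, so their ratio tends to `1`.
-/

open Filter
open scoped Topology

noncomputable section

/-- `η_Δ = Σ_{v=0}^Δ v·2^{-v} / (2 - 2^{-Δ})`. -/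
def etaD (m : ℕ) : ℝ :=
  (∑ v ∈ Finset.range (m+1), (v:ℝ) * (2:ℝ) ^ (-(v:ℝ))) / (2 - (2:ℝ) ^ (-(m:ℝ)))

/-- `κ_Δ = Σ_{v=0}^Δ (v-η_Δ)²·2^{-v} / (2 - 2^{-Δ})`. -/
def kappaD (m : ℕ) : ℝ :=
  (∑ v ∈ Finset.range (m+1), ((v:ℝ) - etaD m)^2 * (2:ℝ) ^ (-(v:ℝ))) /
    (2 - (2:ℝ) ^ (-(m:ℝ)))

open Finset

lemma two_rpow_neg_natCast (i : ℕ) : (2:ℝ) ^ (-(i:ℝ)) = (2:ℝ)⁻¹ ^ i := by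
  rw [Real.rpow_neg zero_le_two, Real.rpow_natCast, inv_pow]

lemma tendsto_two_sub_two_rpow_neg : Tendsto (fun n : ℕ => 2 - (2:ℝ) ^ (-(n:ℝ))) atTop (𝓝 2) := by
  simp only [two_rpow_neg_natCast]
  simpa using tendsto_const_nhds.sub
    (tendsto_pow_atTop_nhds_zero_of_lt_one (by norm_num : (0:ℝ) ≤ 2⁻¹) (by norm_num))

lemma tendsto_const_sub_quadratic_mul_inv_two_pow (c p q r : ℝ) :
    Tendsto (fun n : ℕ => c - (p * n ^ 2 + q * n + r) * (2:ℝ)⁻¹ ^ n) atTop (𝓝 c) := by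
  have h : ∀ k : ℕ, Tendsto (fun n : ℕ => (n:ℝ) ^ k * (2:ℝ)⁻¹ ^ n) atTop (𝓝 0) := fun k =>
    tendsto_pow_const_mul_const_pow_of_abs_lt_one k (by rw [abs_of_pos] <;> norm_num)
  have := (((h 2).const_mul p).add ((h 1).const_mul q)).add ((h 0).const_mul r)
  simpa [add_mul, mul_assoc] using tendsto_const_nhds.sub this

def partialMoment (k n : ℕ) : ℝ := ∑ i ∈ range (n + 1), (i:ℝ) ^ k * (2:ℝ) ^ (-(i:ℝ))

lemma partialMoment_zero_eq (n : ℕ) : partialMoment 0 n = 2 - (2:ℝ)⁻¹ ^ n := by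
  simp only [partialMoment, two_rpow_neg_natCast]
  induction n with
  | zero => norm_num
  | succ n ih => rw [sum_range_succ, ih]; ring

lemma partialMoment_one_eq (n : ℕ) : partialMoment 1 n = 2 - (n + 2) * (2:ℝ)⁻¹ ^ n := by
  simp only [partialMoment, two_rpow_neg_natCast]
  induction n with
  | zero => norm_num
  | succ n ih => rw [sum_range_succ, ih]; push_cast; ring

lemma partialMoment_two_eq (n : ℕ) :
    partialMoment 2 n = 6 - (n ^ 2 + 4 * n + 6) * (2:ℝ)⁻¹ ^ n := by
  simp only [partialMoment, two_rpow_neg_natCast]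
  induction n with
  | zero => norm_num
  | succ n ih => rw [sum_range_succ, ih]; push_cast; ring

lemma tendsto_partialMoment_zero : Tendsto (partialMoment 0) atTop (𝓝 2) := by
  refine (tendsto_const_sub_quadratic_mul_inv_two_pow 2 0 0 1).congr fun n => ?_
  rw [partialMoment_zero_eq]
  ring

lemma tendsto_partialMoment_one : Tendsto (partialMoment 1) atTop (𝓝 2) := by
  refine (tendsto_const_sub_quadratic_mul_inv_two_pow 2 0 1 2).congr fun n => ?_
  rw [partialMoment_one_eq]
  ring

lemma tendsto_partialMoment_two : Tendsto (partialMoment 2) atTop (𝓝 6) := by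
  refine (tendsto_const_sub_quadratic_mul_inv_two_pow 6 1 4 6).congr fun n => ?_
  rw [partialMoment_two_eq]
  ring

lemma tendsto_etaD : Tendsto etaD atTop (𝓝 1) := by
  have h := tendsto_partialMoment_one.div tendsto_two_sub_two_rpow_neg two_ne_zero
  rw [div_self two_ne_zero] at h
  exact h.congr fun m => by simp only [Pi.div_apply, partialMoment, pow_one, etaD]

def laggedSum (n : ℕ) (a b : ℝ) : ℝ :=
  ∑ i ∈ range (n + 1), (2:ℝ) ^ (-(i:ℝ)) * (((i:ℝ) - a) * ((i:ℝ) + b - a))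

lemma laggedSum_eq (n : ℕ) (a b : ℝ) :
    laggedSum n a b =
      partialMoment 2 n + (b - 2 * a) * partialMoment 1 n + (a ^ 2 - a * b) * partialMoment 0 n := by
  simp only [laggedSum, partialMoment, mul_sum, ← sum_add_distrib]
  exact sum_congr rfl fun i _ => by ring

lemma tendsto_laggedSum {ι : Type*} {l : Filter ι} {n : ι → ℕ} {a : ι → ℝ}
    (hn : Tendsto n l atTop) (ha : Tendsto a l (𝓝 1)) (b : ℝ) :
    Tendsto (fun k => laggedSum (n k) (a k) b) l (𝓝 4) := by
  simp only [laggedSum_eq]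
  have := ((tendsto_partialMoment_two.comp hn).add
    (((tendsto_const_nhds (x := b)).sub (ha.const_mul 2)).mul (tendsto_partialMoment_one.comp hn))).add
    (((ha.pow 2).sub (ha.mul_const b)).mul (tendsto_partialMoment_zero.comp hn))
  rwa [show (6:ℝ) + (b - 2 * 1) * 2 + (1 ^ 2 - 1 * b) * 2 = 4 by ring] at this

lemma kappaD_eq_laggedSum (m : ℕ) :
    kappaD m = laggedSum m (etaD m) 0 / (2 - (2:ℝ) ^ (-(m:ℝ))) := by
  simp only [kappaD, laggedSum]
  congr 1
  exact sum_congr rfl fun i _ => by ring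

lemma tendsto_kappaD : Tendsto kappaD atTop (𝓝 2) := by
  have h := (tendsto_laggedSum tendsto_id tendsto_etaD 0).div tendsto_two_sub_two_rpow_neg two_ne_zero
  rw [show (4:ℝ) / 2 = 2 by norm_num] at h
  exact h.congr fun m => (kappaD_eq_laggedSum m).symm

/-- For every fixed `u ≥ 0`,
`(1/κ_Δ) Σ_{i=0}^{Δ-u} (2^{-i}/(2-2^{-Δ})) (i-η_Δ)(i+u-η_Δ) → 1` as `Δ → ∞`. -/
theorem weighted_autocovariance_ratio_tendsto_one (u : ℕ) :
    Tendsto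
      (fun Δ : ℕ =>
        (1 / kappaD Δ) *
          ∑ i ∈ Finset.range (Δ - u + 1),
            ((2:ℝ) ^ (-(i:ℝ)) / (2 - (2:ℝ) ^ (-(Δ:ℝ)))) *
              (((i:ℝ) - etaD Δ) * ((i:ℝ) + (u:ℝ) - etaD Δ)))
      atTop (𝓝 1) := by
  have hlag := (tendsto_laggedSum (tendsto_sub_atTop_nat u) tendsto_etaD u).div
    tendsto_two_sub_two_rpow_neg two_ne_zero
  have hsum : ∀ Δ : ℕ, laggedSum (Δ - u) (etaD Δ) u / (2 - (2:ℝ) ^ (-(Δ:ℝ))) =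
      ∑ i ∈ range (Δ - u + 1), ((2:ℝ) ^ (-(i:ℝ)) / (2 - (2:ℝ) ^ (-(Δ:ℝ)))) *
        (((i:ℝ) - etaD Δ) * ((i:ℝ) + (u:ℝ) - etaD Δ)) := fun Δ => by
    simp only [laggedSum, sum_div, div_mul_eq_mul_div]
  have hlim := ((tendsto_const_nhds (x := (1:ℝ))).div tendsto_kappaD two_ne_zero).mul hlag
  rw [show (1:ℝ) / 2 * (4 / 2) = 1 by norm_num] at hlim
  exact hlim.congr fun Δ => by simp only [Pi.div_apply, hsum]
end
end

section
/- Let Δ ≥ 0 be an integer, δ₁, δ₂ ∈ ℝ, and let a: ℕ → ℝ be any sequence. Then Σ_{u=0}^{Δ} Σ_{u'=0}^{Δ} 2^{(max(u,u')−u)δ₁ + (max(u,u')−u')δ₂} · 2^{−(u+u'+|u−u'|)/2} / (2 − 2^{−Δ}) · a(|u−u'|) = a(0) + Σ_{u=1}^{Δ} (2^{uδ₁} + 2^{uδ₂}) · 2^{−u} · ((2 − 2^{−Δ+u})/(2 − 2^{−Δ})) · a(u). -/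
/-!
Split the square `[0, Δ]²` into the hooks `{(u, m), (m, u) : u ≤ m}`. Since
`(u + v + |u - v|) / 2 = max u v`, every term of the `m`-th hook carries the factor `2^{-m}`, so
the hook sums to `2^{-m} (a 0 + Σ_{k=1}^m (2^{kδ₁} + 2^{kδ₂}) a k)`. Exchanging the sums over `m`
and `k` leaves the geometric sums `Σ_{m=k}^Δ 2^{-m} = 2^{-k} (2 - 2^{-(Δ-k)})`; the case `k = 0`
is the normalising factor `2 - 2^{-Δ}`.
-/

noncomputable section

open Finset

theorem Finset.sum_range_sum_range_eq_sum_hooks {M : Type*} [AddCommMonoid M] (f : ℕ → ℕ → M)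
    (n : ℕ) :
    ∑ u ∈ range n, ∑ v ∈ range n, f u v
      = ∑ m ∈ range n, (f m m + ∑ u ∈ range m, (f u m + f m u)) := by
  induction n with
  | zero => simp
  | succ n ih =>
    conv_rhs => rw [sum_range_succ, ← ih]
    simp only [sum_range_succ, sum_add_distrib]
    abel

theorem sum_Icc_two_rpow_neg {k n : ℕ} (hkn : k ≤ n) :
    ∑ m ∈ Icc k n, (2:ℝ) ^ (-(m:ℝ)) = 2 ^ (-(k:ℝ)) * (2 - 2 ^ (-((n:ℝ) - k))) := by
  have two_rpow_neg : ∀ m : ℕ, (2:ℝ) ^ (-(m:ℝ)) = 2⁻¹ ^ m := by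
    simp [Real.rpow_neg, inv_pow]
  rw [← Nat.cast_sub hkn]
  simp only [two_rpow_neg]
  induction n, hkn using Nat.le_induction with
  | base => simp only [Icc_self, sum_singleton, Nat.sub_self, pow_zero]; ring
  | succ n hkn ih =>
    rw [sum_Icc_succ_top (by omega), ih, Nat.sub_add_comm hkn, pow_succ,
      ← Nat.add_sub_of_le hkn, pow_add, Nat.add_sub_cancel_left]
    ring

def covarianceTerm (δ1 δ2 : ℝ) (a : ℕ → ℝ) (u v : ℕ) : ℝ :=
  (2:ℝ) ^ (((max u v : ℕ) - (u:ℝ)) * δ1 + ((max u v : ℕ) - (v:ℝ)) * δ2) *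
    (2:ℝ) ^ (-(((u:ℝ) + (v:ℝ) + |(u:ℝ) - (v:ℝ)|) / 2)) * a ((u:ℤ) - (v:ℤ)).natAbs

theorem covarianceTerm_swap (δ1 δ2 : ℝ) (a : ℕ → ℝ) (u v : ℕ) :
    covarianceTerm δ1 δ2 a v u = covarianceTerm δ2 δ1 a u v := by
  unfold covarianceTerm
  rw [max_comm, abs_sub_comm, ← Int.natAbs_neg, neg_sub]
  ring_nf

theorem covarianceTerm_of_le (δ1 δ2 : ℝ) (a : ℕ → ℝ) {u v : ℕ} (huv : u ≤ v) :
    covarianceTerm δ1 δ2 a u v = 2 ^ (((v - u : ℕ) : ℝ) * δ1) * 2 ^ (-(v:ℝ)) * a (v - u) := by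
  have hnatAbs : ((u:ℤ) - v).natAbs = v - u := by omega
  have hcast : ((v - u : ℕ) : ℝ) = v - u := Nat.cast_sub huv
  have habs : |(u:ℝ) - v| = v - u := by
    rw [abs_sub_comm, abs_of_nonneg (sub_nonneg.2 (Nat.cast_le.2 huv))]
  unfold covarianceTerm
  rw [max_eq_right huv, habs, hnatAbs, hcast]
  ring_nf

theorem covarianceTerm_hook (δ1 δ2 : ℝ) (a : ℕ → ℝ) (m : ℕ) :
    covarianceTerm δ1 δ2 a m m
        + ∑ u ∈ range m, (covarianceTerm δ1 δ2 a u m + covarianceTerm δ1 δ2 a m u)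
      = 2 ^ (-(m:ℝ)) * (a 0 + ∑ k ∈ Icc 1 m, (2 ^ ((k:ℝ) * δ1) + 2 ^ ((k:ℝ) * δ2)) * a k) := by
  have hdiag : covarianceTerm δ1 δ2 a m m = 2 ^ (-(m:ℝ)) * a 0 := by
    simp [covarianceTerm_of_le δ1 δ2 a le_rfl]
  have hoff : ∑ u ∈ range m, (covarianceTerm δ1 δ2 a u m + covarianceTerm δ1 δ2 a m u)
      = 2 ^ (-(m:ℝ)) * ∑ u ∈ range m,
          (2 ^ (((m - u : ℕ) : ℝ) * δ1) + 2 ^ (((m - u : ℕ) : ℝ) * δ2)) * a (m - u) := by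
    rw [mul_sum]
    refine sum_congr rfl fun u hu => ?_
    have hum : u ≤ m := (mem_range.1 hu).le
    rw [covarianceTerm_swap δ1 δ2 a u m, covarianceTerm_of_le _ _ _ hum,
      covarianceTerm_of_le _ _ _ hum]
    ring
  rw [hdiag, hoff, range_eq_Ico,
    sum_Ico_reflect (fun k => (2 ^ ((k:ℝ) * δ1) + 2 ^ ((k:ℝ) * δ2)) * a k) 0 (Nat.le_succ m),
    Nat.add_sub_cancel_left, Nat.sub_zero, Ico_add_one_right_eq_Icc]
  ring

theorem sum_covarianceTerm (δ1 δ2 : ℝ) (a : ℕ → ℝ) (Δ : ℕ) :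
    ∑ u ∈ range (Δ + 1), ∑ v ∈ range (Δ + 1), covarianceTerm δ1 δ2 a u v
      = (2 - 2 ^ (-(Δ:ℝ))) * a 0 + ∑ k ∈ Icc 1 Δ,
          (2 ^ ((k:ℝ) * δ1) + 2 ^ ((k:ℝ) * δ2)) * 2 ^ (-(k:ℝ)) * (2 - 2 ^ (-((Δ:ℝ) - k)))
            * a k := by
  rw [sum_range_sum_range_eq_sum_hooks, sum_congr rfl fun m _ => covarianceTerm_hook δ1 δ2 a m]
  simp only [mul_add, sum_add_distrib, ← sum_mul, mul_sum]
  rw [sum_comm' (t' := Icc 1 Δ) (s' := fun k => Icc k Δ)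
      (by intro m k; simp only [mem_range, mem_Icc]; omega),
    Nat.range_succ_eq_Icc_zero, sum_Icc_two_rpow_neg (Nat.zero_le Δ)]
  congr 1
  · simp
  · refine sum_congr rfl fun k hk => ?_
    rw [← sum_mul, sum_Icc_two_rpow_neg (mem_Icc.1 hk).2]
    ring

/-- The double-sum simplification underlying the asymptotic covariance `𝓘^G_Δ`:
`Σ_{u,u'=0}^Δ 2^{(u∨u'-u)δ₁+(u∨u'-u')δ₂} 2^{-(u+u'+|u-u'|)/2}/(2-2^{-Δ}) a(|u-u'|)
 = a(0) + Σ_{u=1}^Δ (2^{uδ₁}+2^{uδ₂}) 2^{-u} ((2-2^{-Δ+u})/(2-2^{-Δ})) a(u)`. -/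
theorem double_sum_simplification (Δ : ℕ) (δ1 δ2 : ℝ) (a : ℕ → ℝ) :
    ∑ u ∈ Finset.range (Δ+1), ∑ u' ∈ Finset.range (Δ+1),
        (2:ℝ) ^ (((max u u' : ℕ) - (u:ℝ)) * δ1 + ((max u u' : ℕ) - (u':ℝ)) * δ2) *
          ((2:ℝ) ^ (-(((u:ℝ) + (u':ℝ) + |(u:ℝ) - (u':ℝ)|) / 2)) /
            (2 - (2:ℝ) ^ (-(Δ:ℝ)))) *
          a ((u:ℤ) - (u':ℤ)).natAbs
      = a 0 + ∑ u ∈ Finset.Icc 1 Δ,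
          ((2:ℝ) ^ ((u:ℝ) * δ1) + (2:ℝ) ^ ((u:ℝ) * δ2)) * (2:ℝ) ^ (-(u:ℝ)) *
            ((2 - (2:ℝ) ^ (-((Δ:ℝ) - (u:ℝ)))) / (2 - (2:ℝ) ^ (-(Δ:ℝ)))) * a u := by
  have hnorm : (2:ℝ) - 2 ^ (-(Δ:ℝ)) ≠ 0 := by
    have : (2:ℝ) ^ (-(Δ:ℝ)) ≤ 1 :=
      Real.rpow_le_one_of_one_le_of_nonpos one_le_two (neg_nonpos.2 Δ.cast_nonneg)
    linarith
  calc _ = (∑ u ∈ range (Δ + 1), ∑ v ∈ range (Δ + 1), covarianceTerm δ1 δ2 a u v)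
        / (2 - 2 ^ (-(Δ:ℝ))) := by
        simp only [sum_div]
        refine sum_congr rfl fun u _ => sum_congr rfl fun v _ => ?_
        rw [covarianceTerm]
        ring
    _ = _ := by
        rw [sum_covarianceTerm, add_div, mul_div_cancel_left₀ _ hnorm, sum_div]
        refine congrArg (a 0 + ·) (sum_congr rfl fun k _ => ?_)
        ring
end
end
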